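/- Let h : ℝ^q → ℝ be differentiable with H-Lipschitz gradient and let ρ > 2H. Define for sequences z^k, y^k with y^k = ∇h(z^k) for all k the quantity D_k = h(z^k) - h(z^{k+1}) + ⟨∇h(z^{k+1}), z^{k+1} - z^k⟩ + (ρ/2)‖z^{k+1} - z^k‖² - (1/ρ)‖y^{k+1} - y^k‖². Then D_k ≥ C₁‖z^{k+1} - z^k‖² where C₁ = ρ/2 - H/2 - H²/ρ > 0. -/

import Mathlib

open RealInnerProductSpace

/-!
With `v = z^k - z^{k+1}`, the Lipschitz bound on `∇h` makes
`t ↦ h(z^{k+1} + t v) - t ⟪∇h(z^{k+1}), v⟫ + (H/2) t² ‖v‖²` nondecreasing on `[0, 1]`, which is the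
descent lemma `h(z^k) ≥ h(z^{k+1}) + ⟪∇h(z^{k+1}), z^k - z^{k+1}⟫ - (H/2)‖z^k - z^{k+1}‖²`.
Since `y^k = ∇h(z^k)`, the Lipschitz bound also gives `‖y^{k+1} - y^k‖² ≤ H²‖z^{k+1} - z^k‖²`,
and the two estimates add up to the claim.
-/

variable {E : Type*} [NormedAddCommGroup E] [InnerProductSpace ℝ E] [CompleteSpace E]

lemma hasDerivAt_comp_add_smul_of_differentiableAt {h : E → ℝ} {a v : E} {t : ℝ}
    (hd : DifferentiableAt ℝ h (a + t • v)) :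
    HasDerivAt (fun s : ℝ => h (a + s • v)) ⟪gradient h (a + t • v), v⟫ t := by
  have hline : HasDerivAt (fun s : ℝ => a + s • v) v t := by
    simpa using ((hasDerivAt_id t).smul_const v).const_add a
  rw [inner_gradient_left]
  exact hd.hasFDerivAt.comp_hasDerivAt t hline

lemma add_inner_gradient_sub_le_of_lipschitz_gradient {h : E → ℝ} {H : ℝ}
    (hdiff : Differentiable ℝ h)
    (hlip : ∀ x y, ‖gradient h x - gradient h y‖ ≤ H * ‖x - y‖) (a b : E) :
    h a + ⟪gradient h a, b - a⟫ - H / 2 * ‖b - a‖ ^ 2 ≤ h b := by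
  set v := b - a
  let φ : ℝ → ℝ := fun t => h (a + t • v) - t * ⟪gradient h a, v⟫ + H / 2 * t ^ 2 * ‖v‖ ^ 2
  have hφ : ∀ t, HasDerivAt φ (⟪gradient h (a + t • v) - gradient h a, v⟫ + H * t * ‖v‖ ^ 2) t := by
    intro t
    refine (((hasDerivAt_comp_add_smul_of_differentiableAt (hdiff _)).sub
      ((hasDerivAt_id t).mul_const ⟪gradient h a, v⟫)).add
      (((hasDerivAt_pow 2 t).const_mul (H / 2)).mul_const (‖v‖ ^ 2))).congr_deriv ?_
    rw [inner_sub_left]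
    simp only [one_mul, Nat.cast_ofNat]
    ring
  have hφ' : ∀ t ∈ interior (Set.Icc (0 : ℝ) 1),
      0 ≤ ⟪gradient h (a + t • v) - gradient h a, v⟫ + H * t * ‖v‖ ^ 2 := by
    intro t ht
    rw [interior_Icc] at ht
    have hgrad : ‖gradient h (a + t • v) - gradient h a‖ ≤ H * (t * ‖v‖) := by
      simpa [norm_smul, abs_of_pos ht.1] using hlip (a + t • v) a
    have hcs := neg_le_of_abs_le (abs_real_inner_le_norm (gradient h (a + t • v) - gradient h a) v)
    nlinarith [mul_le_mul_of_nonneg_right hgrad (norm_nonneg v)]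
  have hmono : MonotoneOn φ (Set.Icc 0 1) :=
    monotoneOn_of_hasDerivWithinAt_nonneg (convex_Icc 0 1)
      (fun t _ => (hφ t).continuousAt.continuousWithinAt)
      (fun t _ => (hφ t).hasDerivWithinAt) hφ'
  have h01 := hmono (by simp) (by simp) zero_le_one
  simp only [φ, zero_smul, add_zero, one_smul, v, add_sub_cancel] at h01
  linarith

/-- Sufficient descent in the z- and y-updates of miADMM (Lemma A.4). -/
theorem z_y_sufficient_descent {q : ℕ} (h : EuclideanSpace ℝ (Fin q) → ℝ) (H ρ : ℝ)
    (hH : 0 ≤ H) (hρ : ρ > 2 * H)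
    (hdiff : Differentiable ℝ h)
    (hlip : ∀ z z', ‖gradient h z - gradient h z'‖ ≤ H * ‖z - z'‖)
    (z y : ℕ → EuclideanSpace ℝ (Fin q))
    (hy : ∀ k, y k = gradient h (z k)) :
    ∀ k : ℕ,
      h (z k) - h (z (k + 1)) + ⟪gradient h (z (k + 1)), z (k + 1) - z k⟫ +
          (ρ / 2) * ‖z (k + 1) - z k‖ ^ 2 - (1 / ρ) * ‖y (k + 1) - y k‖ ^ 2 ≥
        (ρ / 2 - H / 2 - H ^ 2 / ρ) * ‖z (k + 1) - z k‖ ^ 2 := by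
  intro k
  have hρ0 : 0 < ρ := by linarith
  have hdescent := add_inner_gradient_sub_le_of_lipschitz_gradient hdiff hlip (z (k + 1)) (z k)
  rw [norm_sub_rev, ← neg_sub (z (k + 1)) (z k), inner_neg_right] at hdescent
  have hy_sq : ‖y (k + 1) - y k‖ ^ 2 ≤ H ^ 2 * ‖z (k + 1) - z k‖ ^ 2 := by
    rw [← mul_pow, hy, hy]
    exact pow_le_pow_left₀ (norm_nonneg _) (hlip _ _) 2
  have hy_term : (1 / ρ) * ‖y (k + 1) - y k‖ ^ 2 ≤ H ^ 2 / ρ * ‖z (k + 1) - z k‖ ^ 2 := by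
    calc (1 / ρ) * ‖y (k + 1) - y k‖ ^ 2 ≤ (1 / ρ) * (H ^ 2 * ‖z (k + 1) - z k‖ ^ 2) := by
          gcongr
      _ = H ^ 2 / ρ * ‖z (k + 1) - z k‖ ^ 2 := by ring
  linarith
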